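/- Let (X, d) be a metric space in which any two points are joined by at most 3 distinct geodesics and such that whenever two geodesics from a common starting point z meet again at a point u ≠ z strictly before both end, the geodesic restrictions give two distinct geodesics from z to u. Then for any z, w ∈ X and any two geodesics P, P' from z to w, the set {t ∈ [0, d(z,w)] : P(t) ≠ P'(t)} has at most two connected components. -/

import Mathlib

/-- `P` is a geodesic from `x` to `y` in a metric space: a path defined on
`[0, dist x y]` with `P 0 = x`, `P (dist x y) = y`, and
`dist (P s) (P t) = |s - t|` for all `s, t` in the domain. -/
def IsGeodesic {X : Type*} [MetricSpace X] (x y : X)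
    (P : Set.Icc (0 : ℝ) (dist x y) → X) : Prop :=
  P ⟨0, Set.left_mem_Icc.mpr dist_nonneg⟩ = x ∧
  P ⟨dist x y, Set.right_mem_Icc.mpr dist_nonneg⟩ = y ∧
  ∀ s t : Set.Icc (0 : ℝ) (dist x y), dist (P s) (P t) = |s.1 - t.1|

/-!
Switching from `P` to `P'` on any union of connected components of the set where they
differ yields again a geodesic: between a time inside such a union and a time outside it
the two paths meet at some time `u`, and the triangle inequality through `P u = P' u`
and through `z` gives the mixed distances. Two distinct components would therefore give
`2 ^ 2 = 4` distinct geodesics from `z` to `w`, so the disagreement set is connected.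
-/

open Set

def disagreementSet {Y : Type*} {I : Set ℝ} (P P' : I → Y) : Set ℝ :=
  {r | ∃ h : r ∈ I, P ⟨r, h⟩ ≠ P' ⟨r, h⟩}

theorem exists_eq_of_notMem_connectedComponentIn_disagreementSet {Y : Type*} {a b : ℝ}
    {P P' : Icc a b → Y} {s t : Icc a b}
    (ht : t.1 ∉ connectedComponentIn (disagreementSet P P') s.1) :
    ∃ u : Icc a b, u.1 ∈ uIcc s.1 t.1 ∧ P u = P' u := by
  by_contra! hne
  have hsub : uIcc s.1 t.1 ⊆ disagreementSet P P' := fun r hr =>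
    have hr' : r ∈ Icc a b := uIcc_subset_Icc s.2 t.2 hr
    ⟨hr', hne ⟨r, hr'⟩ hr⟩
  exact ht (isPreconnected_uIcc.subset_connectedComponentIn left_mem_uIcc hsub right_mem_uIcc)

namespace IsGeodesic

variable {X : Type*} [MetricSpace X] {z w : X} {P P' : Icc (0 : ℝ) (dist z w) → X}

theorem dist_left_apply (hP : IsGeodesic z w P) (t : Icc (0 : ℝ) (dist z w)) :
    dist z (P t) = t := by
  have h := hP.2.2 ⟨0, left_mem_Icc.mpr dist_nonneg⟩ t
  rwa [hP.1, zero_sub, abs_neg, abs_of_nonneg t.2.1] at h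

theorem dist_apply_apply_of_le_of_eq (hP : IsGeodesic z w P) (hP' : IsGeodesic z w P')
    {s u t : Icc (0 : ℝ) (dist z w)} (hsu : s.1 ≤ u.1) (hut : u.1 ≤ t.1) (hu : P u = P' u) :
    dist (P' s) (P t) = t - s := by
  have hupper : dist (P' s) (P t) ≤ t - s :=
    calc dist (P' s) (P t) ≤ dist (P' s) (P' u) + dist (P u) (P t) :=
          hu ▸ dist_triangle _ _ _
      _ = t - s := by
          rw [hP'.2.2, hP.2.2, abs_of_nonpos (by linarith), abs_of_nonpos (by linarith)]
          ring
  have hlower : (t : ℝ) ≤ s + dist (P' s) (P t) :=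
    calc (t : ℝ) = dist z (P t) := (hP.dist_left_apply t).symm
      _ ≤ dist z (P' s) + dist (P' s) (P t) := dist_triangle _ _ _
      _ = s + dist (P' s) (P t) := by rw [hP'.dist_left_apply s]
  linarith

theorem dist_apply_apply_of_mem_uIcc_of_eq (hP : IsGeodesic z w P) (hP' : IsGeodesic z w P')
    {s u t : Icc (0 : ℝ) (dist z w)} (hu : u.1 ∈ uIcc s.1 t.1) (heq : P u = P' u) :
    dist (P' s) (P t) = |s.1 - t.1| := by
  rcases le_total s.1 t.1 with hst | hts
  · rw [uIcc_of_le hst] at hu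
    rw [abs_sub_comm, abs_of_nonneg (sub_nonneg.mpr hst)]
    exact hP.dist_apply_apply_of_le_of_eq hP' hu.1 hu.2 heq
  · rw [uIcc_of_ge hts] at hu
    rw [abs_of_nonneg (sub_nonneg.mpr hts), dist_comm]
    exact hP'.dist_apply_apply_of_le_of_eq hP hu.1 hu.2 heq.symm

theorem piecewise (hP : IsGeodesic z w P)
    (hP' : IsGeodesic z w P') (S : Set (Icc (0 : ℝ) (dist z w))) [DecidablePred (· ∈ S)]
    (hS : ∀ s ∈ S, ∀ t, t.1 ∈ connectedComponentIn (disagreementSet P P') s.1 → t ∈ S) :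
    IsGeodesic z w (S.piecewise P' P) := by
  have hcross : ∀ s t, s ∈ S → t ∉ S → dist (P' s) (P t) = |s.1 - t.1| := fun s t hs ht =>
    have ⟨_, hu, heq⟩ := exists_eq_of_notMem_connectedComponentIn_disagreementSet
      (fun h => ht (hS s hs t h))
    hP.dist_apply_apply_of_mem_uIcc_of_eq hP' hu heq
  refine ⟨?_, ?_, fun s t => ?_⟩
  · by_cases h : ⟨0, left_mem_Icc.mpr dist_nonneg⟩ ∈ S
    · rw [piecewise_eq_of_mem _ _ _ h, hP'.1]
    · rw [piecewise_eq_of_notMem _ _ _ h, hP.1]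
  · by_cases h : ⟨dist z w, right_mem_Icc.mpr dist_nonneg⟩ ∈ S
    · rw [piecewise_eq_of_mem _ _ _ h, hP'.2.1]
    · rw [piecewise_eq_of_notMem _ _ _ h, hP.2.1]
  · by_cases hs : s ∈ S <;> by_cases ht : t ∈ S
    · rw [piecewise_eq_of_mem _ _ _ hs, piecewise_eq_of_mem _ _ _ ht, hP'.2.2]
    · rw [piecewise_eq_of_mem _ _ _ hs, piecewise_eq_of_notMem _ _ _ ht, hcross s t hs ht]
    · rw [piecewise_eq_of_notMem _ _ _ hs, piecewise_eq_of_mem _ _ _ ht, dist_comm,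
        hcross t s ht hs, abs_sub_comm]
    · rw [piecewise_eq_of_notMem _ _ _ hs, piecewise_eq_of_notMem _ _ _ ht, hP.2.2]

end IsGeodesic

theorem Set.piecewise_apply_eq_piecewise_apply_iff {α β : Type*} {f g : α → β} {a : α}
    (hfg : f a ≠ g a) (S S' : Set α) [DecidablePred (· ∈ S)] [DecidablePred (· ∈ S')] :
    S.piecewise f g a = S'.piecewise f g a ↔ (a ∈ S ↔ a ∈ S') := by
  by_cases h : a ∈ S <;> by_cases h' : a ∈ S' <;> simp [h, h', hfg, hfg.symm]

theorem isPreconnected_disagreementSet_of_isGeodesic {X : Type*} [MetricSpace X]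
    {z w : X} {P P' : Icc (0 : ℝ) (dist z w) → X}
    (hatmost3 : ∀ f : Fin 4 → {Q : Icc (0 : ℝ) (dist z w) → X // IsGeodesic z w Q},
      ¬ Function.Injective f)
    (hP : IsGeodesic z w P) (hP' : IsGeodesic z w P') :
    IsPreconnected (disagreementSet P P') := by
  classical
  set C := connectedComponentIn (disagreementSet P P')
  refine isPreconnected_of_forall_pair fun t₁ h₁ t₂ h₂ => ⟨C t₁, connectedComponentIn_subset _ _,
    mem_connectedComponentIn h₁, ?_, isPreconnected_connectedComponentIn⟩
  by_contra h₂₁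
  have h₁₂ : t₁ ∉ C t₂ := fun h =>
    h₂₁ ((connectedComponentIn_eq h).le (mem_connectedComponentIn h₂))
  let S : Fin 4 → Set ℝ := ![∅, C t₁, C t₂, C t₁ ∪ C t₂]
  have hS : ∀ i, ∀ s ∈ S i, C s ⊆ S i := by
    intro i
    fin_cases i
    · simp [S]
    · exact fun s hs => (connectedComponentIn_eq hs).ge
    · exact fun s hs => (connectedComponentIn_eq hs).ge
    · rintro s (hs | hs)
      · exact (connectedComponentIn_eq hs).ge.trans subset_union_left
      · exact (connectedComponentIn_eq hs).ge.trans subset_union_right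
  let Q i := (Subtype.val ⁻¹' S i : Set (Icc (0 : ℝ) (dist z w))).piecewise P' P
  apply hatmost3 fun i =>
    ⟨Q i, hP.piecewise hP' _ fun s hs _ ht => hS i s hs ht⟩
  intro i j hij
  have ⟨hI₁, hne₁⟩ := h₁
  have ⟨hI₂, hne₂⟩ := h₂
  have hQ : Q i = Q j := congrArg Subtype.val hij
  have e₁ := (piecewise_apply_eq_piecewise_apply_iff hne₁.symm _ _).mp (congrFun hQ ⟨t₁, hI₁⟩)
  have e₂ := (piecewise_apply_eq_piecewise_apply_iff hne₂.symm _ _).mp (congrFun hQ ⟨t₂, hI₂⟩)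
  have m₁ : t₁ ∈ C t₁ := mem_connectedComponentIn h₁
  have m₂ : t₂ ∈ C t₂ := mem_connectedComponentIn h₂
  fin_cases i <;> fin_cases j <;> simp_all [S]

theorem at_most_two_excursions_general {X : Type*} [MetricSpace X]
    (hatmost3 : ∀ (x y : X)
      (f : Fin 4 → {Q : Set.Icc (0 : ℝ) (dist x y) → X // IsGeodesic x y Q}),
      ¬ Function.Injective f)
    (z w : X) (P P' : Set.Icc (0 : ℝ) (dist z w) → X)
    (hP : IsGeodesic z w P) (hP' : IsGeodesic z w P') :
    ∃ C₁ C₂ : Set ℝ,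
      ∀ t ∈ {r : ℝ | ∃ h : r ∈ Set.Icc (0 : ℝ) (dist z w), P ⟨r, h⟩ ≠ P' ⟨r, h⟩},
        connectedComponentIn
            {r : ℝ | ∃ h : r ∈ Set.Icc (0 : ℝ) (dist z w), P ⟨r, h⟩ ≠ P' ⟨r, h⟩}
            t = C₁ ∨
        connectedComponentIn
            {r : ℝ | ∃ h : r ∈ Set.Icc (0 : ℝ) (dist z w), P ⟨r, h⟩ ≠ P' ⟨r, h⟩}
            t = C₂ := by
  have hD := isPreconnected_disagreementSet_of_isGeodesic (hatmost3 z w) hP hP'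
  exact ⟨disagreementSet P P', ∅, fun t ht => Or.inl (hD.connectedComponentIn ht)⟩

/-- In a metric space in which any two points are joined by at most 3 distinct
geodesics, and in which two geodesics from a common point `z` which separate and
meet again at a point `u ≠ z` strictly before both end give rise to two distinct
geodesics from `z` to `u`, the set of times at which two geodesics `P, P'` from
`z` to `w` differ has at most two connected components. -/
theorem at_most_two_excursions {X : Type*} [MetricSpace X]
    (hatmost3 : ∀ (x y : X)
      (f : Fin 4 → {Q : Set.Icc (0 : ℝ) (dist x y) → X // IsGeodesic x y Q}),
      ¬ Function.Injective f)
    (hrecoalesce : ∀ (z w w' : X) (P : Set.Icc (0 : ℝ) (dist z w) → X)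
      (P' : Set.Icc (0 : ℝ) (dist z w') → X), IsGeodesic z w P →
      IsGeodesic z w' P' →
      ∀ (u : ℝ) (hu : u ∈ Set.Icc (0 : ℝ) (dist z w))
        (hu' : u ∈ Set.Icc (0 : ℝ) (dist z w')),
        0 < u → u < dist z w → u < dist z w' →
        P ⟨u, hu⟩ = P' ⟨u, hu'⟩ →
        (∃ (r : ℝ) (hr : r ∈ Set.Icc (0 : ℝ) (dist z w))
          (hr' : r ∈ Set.Icc (0 : ℝ) (dist z w')),
          r < u ∧ P ⟨r, hr⟩ ≠ P' ⟨r, hr'⟩) →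
        ∃ Q₁ Q₂ : Set.Icc (0 : ℝ) (dist z (P ⟨u, hu⟩)) → X,
          IsGeodesic z (P ⟨u, hu⟩) Q₁ ∧ IsGeodesic z (P ⟨u, hu⟩) Q₂ ∧ Q₁ ≠ Q₂)
    (z w : X) (P P' : Set.Icc (0 : ℝ) (dist z w) → X)
    (hP : IsGeodesic z w P) (hP' : IsGeodesic z w P') :
    ∃ C₁ C₂ : Set ℝ,
      ∀ t ∈ {r : ℝ | ∃ h : r ∈ Set.Icc (0 : ℝ) (dist z w), P ⟨r, h⟩ ≠ P' ⟨r, h⟩},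
        connectedComponentIn
            {r : ℝ | ∃ h : r ∈ Set.Icc (0 : ℝ) (dist z w), P ⟨r, h⟩ ≠ P' ⟨r, h⟩}
            t = C₁ ∨
        connectedComponentIn
            {r : ℝ | ∃ h : r ∈ Set.Icc (0 : ℝ) (dist z w), P ⟨r, h⟩ ≠ P' ⟨r, h⟩}
            t = C₂ :=
  at_most_two_excursions_general hatmost3 z w P P' hP hP'
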